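/- For every k ≥ 2 and N ≥ 0, the de Bruijn graph B_{k,N} is isomorphic, as an oriented graph (forgetting labels), to the graph Γ_{k,N} of the action of the lamplighter group L_k on the N-th level of the k-regular rooted tree with respect to the generating set {c̄_r = cʳb : 0 ≤ r ≤ k−1}. An explicit isomorphism can be built by induction via line graphs. In particular, B_{k,N} is a Schreier graph of L_k. -/

import Mathlib

/-- An oriented (multi)graph: vertices, edges, initial and terminal maps. -/
structure OGraph where
  V : Type
  E : Type
  ι : E → V
  τ : E → V

namespace OGraph

/-- Isomorphism of oriented graphs. -/
structure Iso (G H : OGraph) where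
  fV : G.V ≃ H.V
  fE : G.E ≃ H.E
  hι : ∀ e, H.ι (fE e) = fV (G.ι e)
  hτ : ∀ e, H.τ (fE e) = fV (G.τ e)

/-- The line graph of an oriented graph. -/
def line (G : OGraph) : OGraph where
  V := G.E
  E := {p : G.E × G.E // G.τ p.1 = G.ι p.2}
  ι p := p.1.1
  τ p := p.1.2

end OGraph

/-- The de Bruijn graph `B_{k,N}`: vertices are words `x₁…x_N` over `{0,…,k−1}`
(realized as `ZMod k`), and for each symbol `y` there is one edge from `x₁…x_N`
to `x₂…x_N y`. -/
def deBruijn (k N : ℕ) : OGraph where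
  V := Fin N → ZMod k
  E := (Fin N → ZMod k) × ZMod k
  ι e := e.1
  τ e := fun j => if h : (j : ℕ) + 1 < N then e.1 ⟨(j : ℕ) + 1, h⟩ else e.2

/-- The graph `Γ_{k,N}` of the action of the lamplighter group `L_k = ℤ/kℤ ≀ ℤ` on the
`N`-th level of the `k`-regular rooted tree, with respect to the generators
`c̄_r = cʳb` (`0 ≤ r ≤ k−1`, realized as `r : ZMod k`): for each vertex `x = x₁…x_N`
and each `r` there is one edge from `x` to
`c̄_r · x = (x₁+r)(x₂+x₁)…(x_N+x_{N−1})` (mod `k`). -/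
def gammaGraph (k N : ℕ) : OGraph where
  V := Fin N → ZMod k
  E := (Fin N → ZMod k) × ZMod k
  ι e := e.1
  τ e := fun j => if (j : ℕ) = 0 then e.1 j + e.2
    else e.1 j + e.1 ⟨(j : ℕ) - 1, Nat.lt_of_le_of_lt (Nat.sub_le _ _) j.2⟩

/-
The edges of `B_{k,N}` are the words of length `N + 1` (the edge from `x` labelled `y` is `xy`),
and two consecutive edges form a word of length `N + 2`, so `B_{k,N+1}` is the line graph of
`B_{k,N}`. The same holds for `Γ_{k,N}` once the edge `x → c̄_r x` is read as the word `r x`: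
then `c̄_t (r x) = (r + t)(c̄_r x)`, so the pair of consecutive edges `(x, r)`, `(c̄_r x, s)` is
the edge of `Γ_{k,N+1}` from `r x` with label `s - r`. Since taking line graphs preserves
isomorphism and `B_{k,0} = Γ_{k,0}`, induction on `N` gives the isomorphism.
-/

namespace OGraph

variable {G H K : OGraph}

def Iso.symm (f : G.Iso H) : H.Iso G where
  fV := f.fV.symm
  fE := f.fE.symm
  hι e := by rw [Equiv.eq_symm_apply, ← f.hι, Equiv.apply_symm_apply]
  hτ e := by rw [Equiv.eq_symm_apply, ← f.hτ, Equiv.apply_symm_apply]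

def Iso.trans (f : G.Iso H) (g : H.Iso K) : G.Iso K where
  fV := f.fV.trans g.fV
  fE := f.fE.trans g.fE
  hι e := by simp only [Equiv.trans_apply, g.hι, f.hι]
  hτ e := by simp only [Equiv.trans_apply, g.hτ, f.hτ]

def Iso.line (f : G.Iso H) : G.line.Iso H.line where
  fV := f.fE
  fE := (f.fE.prodCongr f.fE).subtypeEquiv fun p => by
    simp only [Equiv.prodCongr_apply, Prod.map_fst, Prod.map_snd, f.hι, f.hτ,
      f.fV.apply_eq_iff_eq]
  hι _ := rfl
  hτ _ := rfl

/-- In a graph with edge set `V × A` and `ι = Prod.fst`, a pair of consecutive edges is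
determined by its first edge and the label of its second edge. -/
def lineEdgeEquiv {V A : Type} (τ : V × A → V) :
    {p : (V × A) × (V × A) // τ p.1 = p.2.1} ≃ (V × A) × A where
  toFun p := (p.1.1, p.1.2.2)
  invFun q := ⟨(q.1, (τ q.1, q.2)), rfl⟩
  left_inv p := Subtype.ext <| Prod.ext rfl <| Prod.ext p.2 rfl
  right_inv _ := rfl

end OGraph

open OGraph

theorem deBruijn_tau_snoc {k N : ℕ} (x : Fin N → ZMod k) (a b : ZMod k) :
    (deBruijn k (N + 1)).τ (Fin.snoc x a, b) = Fin.snoc ((deBruijn k N).τ (x, a)) b := by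
  funext j
  induction j using Fin.lastCases with
  | last => simp [deBruijn]
  | cast i => simp [deBruijn, Fin.snoc]

theorem gammaGraph_tau_cons {k N : ℕ} (x : Fin N → ZMod k) (r t : ZMod k) :
    (gammaGraph k (N + 1)).τ (Fin.cons r x, t) =
      Fin.cons (r + t) ((gammaGraph k N).τ (x, r)) := by
  funext j
  induction j using Fin.cases with
  | zero => simp [gammaGraph]
  | succ i =>
    simp only [gammaGraph, Fin.cons_succ, Fin.val_succ, Nat.add_one_ne_zero, if_false,
      Nat.add_sub_cancel]
    rcases i with ⟨_ | m, _⟩ <;> rfl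

def deBruijnLineIso (k N : ℕ) : (deBruijn k N).line.Iso (deBruijn k (N + 1)) where
  fV := (Equiv.prodComm _ _).trans (Fin.snocEquiv fun _ => ZMod k)
  fE := (lineEdgeEquiv (deBruijn k N).τ).trans
    (((Equiv.prodComm _ _).trans (Fin.snocEquiv fun _ => ZMod k)).prodCongr (Equiv.refl _))
  hι _ := rfl
  hτ := by
    rintro ⟨⟨⟨x, a⟩, w, b⟩, h : (deBruijn k N).τ (x, a) = w⟩
    subst h
    exact deBruijn_tau_snoc x a b

def gammaGraphLineIso (k N : ℕ) : (gammaGraph k N).line.Iso (gammaGraph k (N + 1)) where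
  fV := (Equiv.prodComm _ _).trans (Fin.consEquiv fun _ => ZMod k)
  fE := (lineEdgeEquiv (gammaGraph k N).τ).trans
    (((Equiv.prodComm _ _).trans (Fin.consEquiv fun _ => ZMod k)).prodShear
      fun e => Equiv.subRight e.2)
  hι _ := rfl
  hτ := by
    rintro ⟨⟨⟨x, r⟩, w, s⟩, h : (gammaGraph k N).τ (x, r) = w⟩
    subst h
    have hcons := gammaGraph_tau_cons x r (s - r)
    rwa [add_sub_cancel] at hcons

def deBruijnIsoGammaGraph (k : ℕ) : ∀ N, (deBruijn k N).Iso (gammaGraph k N)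
  | 0 => ⟨Equiv.refl _, Equiv.refl _, fun _ => rfl,
      fun _ => Subsingleton.elim (α := Fin 0 → ZMod k) _ _⟩
  | N + 1 => (deBruijnLineIso k N).symm.trans
      ((deBruijnIsoGammaGraph k N).line.trans (gammaGraphLineIso k N))

theorem deBruijn_iso_gammaGraph_general (k N : ℕ) :
    Nonempty (OGraph.Iso (deBruijn k N) (gammaGraph k N)) :=
  ⟨deBruijnIsoGammaGraph k N⟩

/-- For every `k ≥ 2` and `N ≥ 0`, the de Bruijn graph `B_{k,N}` is
isomorphic, as an oriented graph, to the graph `Γ_{k,N}` of the action of the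
lamplighter group `L_k` on the `N`-th level of the `k`-regular rooted tree with respect
to the generators `c̄_r = cʳb`; in particular `B_{k,N}` is a Schreier graph of `L_k`. -/
theorem deBruijn_iso_gammaGraph (k N : ℕ) (hk : 2 ≤ k) :
    Nonempty (OGraph.Iso (deBruijn k N) (gammaGraph k N)) :=
  deBruijn_iso_gammaGraph_general k N
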